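/- For every k ≥ 1 there exists a finite triangle-free simple graph G with chromatic number χ(G) > k. (Abstract graph-theoretic statement underlying the segment construction.) -/

import Mathlib

/-!
The shift graph on a linear order `α` has the pairs `a < b` as vertices, `(a, b)` being adjacent
to `(b, c)`. In a triangle each two of the three pairs meet head to tail; following
the meetings around the triangle yields either a cyclic chain `a < b < c < a` or a pair whose two
ends coincide.

Colour it with colours from `β` and record, for each `a`, the set of colours of the pairs `(a, ·)`.
For `a < b` the colour of `(a, b)` lies in the set of `a` but not in that of `b`, as `(a, b)` is
adjacent to every `(b, c)`. These sets are therefore distinct, so `|α| ≤ 2 ^ |β|`: the shift graph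
on `2 ^ k + 1` points is triangle-free and not `k`-colourable.
-/

namespace SimpleGraph

def shiftGraph (α : Type*) [LinearOrder α] : SimpleGraph {p : α × α // p.1 < p.2} where
  Adj p q := p.1.2 = q.1.1 ∨ q.1.2 = p.1.1
  symm := ⟨fun _ _ h ↦ h.symm⟩
  loopless := ⟨fun p h ↦ by rcases h with h | h <;> exact p.2.ne' h⟩

@[simp]
theorem shiftGraph_adj {α : Type*} [LinearOrder α] {p q : {p : α × α // p.1 < p.2}} :
    (shiftGraph α).Adj p q ↔ p.1.2 = q.1.1 ∨ q.1.2 = p.1.1 :=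
  Iff.rfl

namespace shiftGraph

variable {α β : Type*} [LinearOrder α]

theorem cliqueFree_three : (shiftGraph α).CliqueFree 3 := by
  intro _ h
  obtain ⟨⟨⟨a, b⟩, hab⟩, ⟨⟨c, d⟩, hcd⟩, ⟨⟨e, f⟩, hef⟩, h₁, h₂, h₃, -⟩ := is3Clique_iff.1 h
  simp only [shiftGraph_adj] at h₁ h₂ h₃
  rcases h₁ with h₁ | h₁ <;> rcases h₂ with h₂ | h₂ <;> rcases h₃ with h₃ | h₃ <;> order

section Coloring

variable (C : (shiftGraph α).Coloring β)

def forwardColors (a : α) : Set β :=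
  {c | ∃ p, p.1.1 = a ∧ C p = c}

theorem color_mem_forwardColors (p : {p : α × α // p.1 < p.2}) :
    C p ∈ forwardColors C p.1.1 :=
  ⟨p, rfl, rfl⟩

theorem color_notMem_forwardColors (p : {p : α × α // p.1 < p.2}) :
    C p ∉ forwardColors C p.1.2 := by
  rintro ⟨q, hq, hpq⟩
  exact C.valid (shiftGraph_adj.2 (.inl hq.symm)) hpq.symm

theorem forwardColors_injective : Function.Injective (forwardColors C) := by
  refine .of_lt_imp_ne fun a b hab hF ↦ ?_
  have := color_mem_forwardColors C ⟨(a, b), hab⟩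
  exact color_notMem_forwardColors C ⟨(a, b), hab⟩ (hF ▸ this)

end Coloring

theorem card_le_two_pow [Fintype α] [Fintype β] (C : (shiftGraph α).Coloring β) :
    Fintype.card α ≤ 2 ^ Fintype.card β :=
  Fintype.card_set (α := β) ▸ Fintype.card_le_of_injective _ (forwardColors_injective C)

theorem lt_chromaticNumber [Fintype α] {k : ℕ} (hk : 2 ^ k < Fintype.card α) :
    (k : ℕ∞) < (shiftGraph α).chromaticNumber := by
  refine lt_of_not_ge fun hle ↦ ?_
  obtain ⟨C⟩ := chromaticNumber_le_iff_colorable.1 hle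
  exact hk.not_ge (by simpa using card_le_two_pow C)

end shiftGraph

end SimpleGraph

theorem exists_triangle_free_large_chromatic :
    ∀ k : ℕ, 1 ≤ k → ∃ (n : ℕ) (G : SimpleGraph (Fin n)),
      G.CliqueFree 3 ∧ (k : ℕ∞) < G.chromaticNumber := by
  intro k _
  let G := SimpleGraph.shiftGraph (Fin (2 ^ k + 1))
  let e := G.overFinIso rfl
  refine ⟨_, G.overFin rfl, ?_, ?_⟩
  · exact SimpleGraph.shiftGraph.cliqueFree_three.comap e.symm.toEmbedding.isContained
  · rw [← SimpleGraph.chromaticNumber_congr e]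
    exact SimpleGraph.shiftGraph.lt_chromaticNumber (by simp)
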